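/- For all r > 0 and all θ₁,θ₂ ∈ (0,π), the sum of first components weighted by logarithms of the facet pairings satisfies Σ_{A=1}^{4} v_A¹ · log⟨v_A, y(r,θ₁,θ₂)⟩ = 8 log r + 2 log sin θ₁ + 2 log sin θ₂ − 4 log 2 − 4 log 3, where v_A¹ denotes the first component of v_A (which equals 1 for each A). -/

import Mathlib

open Real

/-- The momentum map of the conifold `C(T^{1,1})` in the basis adapted to the toric data. -/
noncomputable def momentumMap (r θ₁ θ₂ : ℝ) : Fin 3 → ℝ :=
  ![r ^ 2 / 6 * (Real.cos θ₁ + 1), r ^ 2 / 6 * (Real.cos θ₂ - Real.cos θ₁),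
    -(r ^ 2 / 6) * (Real.cos θ₁ + Real.cos θ₂)]

/-- The standard inner product on `ℝ³`. -/
def dot3 (v w : Fin 3 → ℝ) : ℝ := ∑ i, v i * w i

/-- The inward normal vectors `v₁=(1,1,1), v₂=(1,0,1), v₃=(1,0,0), v₄=(1,1,0)` of the
moment cone of the conifold. -/
def toricNormal : Fin 4 → (Fin 3 → ℝ) := ![![1, 1, 1], ![1, 0, 1], ![1, 0, 0], ![1, 1, 0]]

/-! The four pairings are `r²/6 · (1 ∓ cos θᵢ)`, so the logarithms of each pair `1 - cos θᵢ`,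
`1 + cos θᵢ` combine through `(1 - cos θ)(1 + cos θ) = sin² θ`. -/

lemma sum_first_components_log_pairings_eq (r θ₁ θ₂ : ℝ) :
    ∑ A : Fin 4, toricNormal A 0 * Real.log (dot3 (toricNormal A) (momentumMap r θ₁ θ₂)) =
      Real.log (r ^ 2 / 6 * (1 - cos θ₁)) + Real.log (r ^ 2 / 6 * (1 - cos θ₂)) +
        Real.log (r ^ 2 / 6 * (1 + cos θ₁)) + Real.log (r ^ 2 / 6 * (1 + cos θ₂)) := by
  simp only [Fin.sum_univ_four, Fin.sum_univ_three, dot3, toricNormal, momentumMap,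
    Matrix.cons_val_zero, Matrix.cons_val_one, Matrix.cons_val_two, Matrix.cons_val_three,
    Matrix.head_cons, Matrix.tail_cons, one_mul]
  congr 3 <;> congr 1 <;> ring

lemma log_sq_div_six_mul {r c : ℝ} (hr : r ≠ 0) (hc : c ≠ 0) :
    Real.log (r ^ 2 / 6 * c) = 2 * Real.log r - Real.log 2 - Real.log 3 + Real.log c := by
  rw [Real.log_mul (by positivity) hc, Real.log_div (by positivity) (by norm_num), Real.log_pow,
    show (6 : ℝ) = 2 * 3 by norm_num, Real.log_mul two_ne_zero three_ne_zero]
  push_cast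
  ring

lemma one_sub_cos_mul_one_add_cos (θ : ℝ) : (1 - cos θ) * (1 + cos θ) = sin θ ^ 2 := by
  rw [sin_sq]
  ring

lemma log_sq_div_six_mul_one_sub_cos_add_one_add_cos {r θ : ℝ} (hr : r ≠ 0)
    (hθ : sin θ ≠ 0) :
    Real.log (r ^ 2 / 6 * (1 - cos θ)) + Real.log (r ^ 2 / 6 * (1 + cos θ)) =
      4 * Real.log r + 2 * Real.log (sin θ) - 2 * Real.log 2 - 2 * Real.log 3 := by
  have hne : (1 - cos θ) * (1 + cos θ) ≠ 0 := by
    rw [one_sub_cos_mul_one_add_cos]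
    exact pow_ne_zero 2 hθ
  have hsum : Real.log (1 - cos θ) + Real.log (1 + cos θ) = 2 * Real.log (sin θ) := by
    rw [← Real.log_mul (left_ne_zero_of_mul hne) (right_ne_zero_of_mul hne),
      one_sub_cos_mul_one_add_cos, Real.log_pow]
    push_cast
    ring
  rw [log_sq_div_six_mul hr (left_ne_zero_of_mul hne), log_sq_div_six_mul hr (right_ne_zero_of_mul hne)]
  linarith

/-- for `r > 0` and `θ₁,θ₂ ∈ (0,π)`,
`Σ_A v_A¹ log⟨v_A, y⟩ = 8 log r + 2 log sin θ₁ + 2 log sin θ₂ − 4 log 2 − 4 log 3`. -/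
theorem sum_first_components_log_pairings (r θ₁ θ₂ : ℝ) (hr : 0 < r)
    (h₁ : θ₁ ∈ Set.Ioo 0 π) (h₂ : θ₂ ∈ Set.Ioo 0 π) :
    ∑ A : Fin 4, toricNormal A 0 * Real.log (dot3 (toricNormal A) (momentumMap r θ₁ θ₂)) =
      8 * Real.log r + 2 * Real.log (Real.sin θ₁) + 2 * Real.log (Real.sin θ₂)
        - 4 * Real.log 2 - 4 * Real.log 3 := by
  have hs₁ : sin θ₁ ≠ 0 := (sin_pos_of_pos_of_lt_pi h₁.1 h₁.2).ne'
  have hs₂ : sin θ₂ ≠ 0 := (sin_pos_of_pos_of_lt_pi h₂.1 h₂.2).ne'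
  rw [sum_first_components_log_pairings_eq]
  linarith [log_sq_div_six_mul_one_sub_cos_add_one_add_cos hr.ne' hs₁,
    log_sq_div_six_mul_one_sub_cos_add_one_add_cos hr.ne' hs₂]
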